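/- (Explicit resolvent kernel of a two-dimensional geometric Brownian motion, Section 3.6.) Let a₁, a₂ > 0, μ₁, μ₂ ∈ ℝ, ρ ∈ (−1,1), r > 0, and set m_i := (μ_i − a_i²/2)/a_i for i = 1, 2. Let x₁, x₂, u, v > 0 and put û := (1/a₁) log(u/x₁), v̂ := (1/a₂) log(v/x₂), and assume (û, v̂) ≠ (0,0). Then ∫₀^∞ e^{−rt} · (a₁ a₂ u v)^{−1} · (2πt√(1−ρ²))^{−1} · exp( −B_ρ(û − m₁ t, v̂ − m₂ t)/(2t(1−ρ²)) ) dt = (π √(1−ρ²) · a₁ a₂ u v)^{−1} · exp( −A_ρ(û,v̂; m₁,m₂)/(2(1−ρ²)) ) · ∫₀^∞ cos(c w)/√(1+w²) dw, where r̂ := r + B_ρ(m₁,m₂)/(2(1−ρ²)) and c := √( 2 r̂ B_ρ(û,v̂)/(1−ρ²) ). -/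

import Mathlib

open MeasureTheory Real Filter
open scoped Topology

/-- `B_ρ(x,y) = x² − 2ρxy + y²`. -/
noncomputable def Brho (ρ x y : ℝ) : ℝ := x ^ 2 - 2 * ρ * x * y + y ^ 2

/-- `A_ρ(x,y;m₁,m₂) = 2ρ(m₂x + m₁y) − 2(m₁x + m₂y)`. -/
noncomputable def Arho (ρ x y m₁ m₂ : ℝ) : ℝ :=
  2 * ρ * (m₂ * x + m₁ * y) - 2 * (m₁ * x + m₂ * y)

/-!
Expanding the quadratic form,
`B_ρ(û - m₁t, v̂ - m₂t) = B_ρ(û, v̂) + t A_ρ(û, v̂; m₁, m₂) + t² B_ρ(m₁, m₂)`,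
turns the Laplace transform into `e^{-A_ρ/(2(1-ρ²))} ∫₀^∞ e^{-r̂t - β/t} dt/t`
with `β = B_ρ(û, v̂)/(2(1-ρ²))`, and a dilation of `t` rescales this to `2 K₀(c)`,
`c² = 4 r̂ β`, where `K₀(c) = ½ ∫₀^∞ e^{-t - c²/(4t)} dt/t`.

To identify `K₀(c)` with the improper integral `∫₀^∞ cos(cw)/√(1+w²) dw`, write
`1/√(1+w²) = √(2/π) ∫₀^∞ e^{-(1+w²)s²/2} ds`, swap the integrals over `w ∈ [0, R]`
and `s`, and let `R → ∞` under the `s`-integral: the inner integral tends to a Gaussian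
cosine transform, and integration by parts bounds it by `2/c` uniformly in `R` and `s`,
which gives dominated convergence.
-/

open Set intervalIntegral

theorem integral_cos_mul_mul_exp_neg_mul_sq {b : ℝ} (hb : 0 < b) (c : ℝ) :
    ∫ x : ℝ, cos (c * x) * exp (-b * x ^ 2) = √(π / b) * exp (-c ^ 2 / (4 * b)) := by
  have hb' : 0 < (b : ℂ).re := by simpa using hb
  have hre (x : ℝ) : (Complex.exp (Complex.I * c * x) * Complex.exp (-b * x ^ 2)).re =
      cos (c * x) * exp (-b * x ^ 2) := by
    rw [show Complex.I * c * x = (c * x : ℝ) * Complex.I by push_cast; ring,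
      show -(b : ℂ) * x ^ 2 = (-b * x ^ 2 : ℝ) by push_cast; ring, ← Complex.ofReal_exp,
      Complex.re_mul_ofReal, Complex.exp_ofReal_mul_I_re]
  have hint : Integrable fun x : ℝ =>
      Complex.exp (Complex.I * c * x) * Complex.exp (-b * x ^ 2) := by
    simpa [← Complex.exp_add, add_comm, mul_comm Complex.I] using
      integrable_cexp_quadratic hb' (c * Complex.I) 0
  have hsqrt : (π / b : ℂ) ^ (1 / 2 : ℂ) = (√(π / b) : ℂ) := by
    rw [sqrt_eq_rpow, Complex.ofReal_cpow (by positivity)]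
    norm_num
  have hexp : Complex.exp (-c ^ 2 / (4 * b)) = (exp (-c ^ 2 / (4 * b)) : ℂ) := by
    push_cast; rfl
  have h := congrArg Complex.re (fourierIntegral_gaussian hb' c)
  rw [← Complex.reCLM_apply, ← ContinuousLinearMap.integral_comp_comm _ hint, hsqrt, hexp,
    ← Complex.ofReal_mul, Complex.ofReal_re] at h
  simpa only [Complex.reCLM_apply, hre] using h

theorem integral_Ioi_cos_mul_mul_exp_neg_mul_sq {b : ℝ} (hb : 0 < b) (c : ℝ) :
    ∫ x in Ioi 0, cos (c * x) * exp (-b * x ^ 2) = √(π / b) / 2 * exp (-c ^ 2 / (4 * b)) := by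
  have heven (x : ℝ) :
      cos (c * |x|) * exp (-b * |x| ^ 2) = cos (c * x) * exp (-b * x ^ 2) := by
    rcases abs_choice x with h | h <;> simp [h]
  have h := integral_comp_abs (f := fun x => cos (c * x) * exp (-b * x ^ 2))
  simp only [heven, integral_cos_mul_mul_exp_neg_mul_sq hb] at h
  linarith

theorem integrable_cos_mul_mul_exp_neg_mul_sq {b : ℝ} (hb : 0 < b) (c : ℝ) :
    Integrable fun x : ℝ => cos (c * x) * exp (-b * x ^ 2) :=
  (integrable_exp_neg_mul_sq hb).bdd_mul (by fun_prop) (ae_of_all _ fun x => by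
    simpa only [norm_eq_abs] using abs_cos_le_one (c * x))

theorem abs_intervalIntegral_mul_deriv_le_of_deriv_nonpos {u u' v v' : ℝ → ℝ} {a b M : ℝ}
    (hab : a ≤ b) (hu : ∀ x ∈ Icc a b, HasDerivAt u (u' x) x)
    (hv : ∀ x ∈ Icc a b, HasDerivAt v (v' x) x) (hu'_int : IntervalIntegrable u' volume a b)
    (hv'_int : IntervalIntegrable v' volume a b) (hu' : ∀ x ∈ Icc a b, u' x ≤ 0)
    (hub : 0 ≤ u b) (hvM : ∀ x ∈ Icc a b, |v x| ≤ M) :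
    |∫ x in a..b, u x * v' x| ≤ 2 * M * u a := by
  rw [← uIcc_of_le hab] at hu hv
  have hftc : ∫ x in a..b, -u' x = u a - u b := by
    rw [intervalIntegral.integral_neg, integral_eq_sub_of_hasDerivAt hu hu'_int, neg_sub]
  have hba : u b ≤ u a := by
    rw [← sub_nonneg, ← hftc]
    exact integral_nonneg hab fun x hx => neg_nonneg.mpr (hu' x hx)
  have hu'v : |∫ x in a..b, u' x * v x| ≤ (u a - u b) * M := by
    rw [← hftc, ← intervalIntegral.integral_mul_const, ← norm_eq_abs]
    refine norm_integral_le_of_norm_le hab (ae_of_all _ fun x hx => ?_)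
      (hu'_int.neg.mul_const M)
    have hx' := Ioc_subset_Icc_self hx
    rw [norm_mul, norm_eq_abs, abs_of_nonpos (hu' x hx')]
    exact mul_le_mul_of_nonneg_left (hvM x hx') (neg_nonneg.mpr (hu' x hx'))
  rw [integral_mul_deriv_eq_deriv_mul hu hv hu'_int hv'_int]
  have hvb := hvM b (right_mem_Icc.mpr hab)
  have hva := hvM a (left_mem_Icc.mpr hab)
  calc |u b * v b - u a * v a - ∫ x in a..b, u' x * v x|
      ≤ |u b * v b| + |u a * v a| + |∫ x in a..b, u' x * v x| :=
        (abs_sub _ _).trans (by gcongr; exact abs_sub _ _)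
    _ = u b * |v b| + u a * |v a| + |∫ x in a..b, u' x * v x| := by
        rw [abs_mul, abs_mul, abs_of_nonneg hub, abs_of_nonneg (hub.trans hba)]
    _ ≤ u b * M + u a * M + (u a - u b) * M := by gcongr; exact hub.trans hba
    _ = 2 * M * u a := by ring

theorem abs_intervalIntegral_cos_mul_mul_exp_neg_mul_sq_le {a c R : ℝ} (ha : 0 ≤ a)
    (hc : 0 < c) (hR : 0 ≤ R) : |∫ w in 0..R, cos (c * w) * exp (-a * w ^ 2)| ≤ 2 / c := by
  have hu (w : ℝ) :
      HasDerivAt (fun w => exp (-a * w ^ 2)) (-(2 * a * w) * exp (-a * w ^ 2)) w :=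
    ((hasDerivAt_pow 2 w).const_mul (-a)).exp.congr_deriv (by simp; ring)
  have hv (w : ℝ) : HasDerivAt (fun w => sin (c * w) / c) (cos (c * w)) w :=
    ((hasDerivAt_id w).const_mul c).sin.div_const c |>.congr_deriv (by simp [field])
  have h := abs_intervalIntegral_mul_deriv_le_of_deriv_nonpos (M := 1 / c) hR
    (fun w _ => hu w) (fun w _ => hv w) ((by fun_prop : Continuous _).intervalIntegrable 0 R)
    ((by fun_prop : Continuous _).intervalIntegrable 0 R)
    (fun w hw => mul_nonpos_of_nonpos_of_nonneg (by nlinarith [hw.1]) (exp_pos _).le)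
    (exp_pos _).le (fun w _ => by
      rw [abs_div, abs_of_pos hc]
      exact div_le_div_of_nonneg_right (abs_sin_le_one _) hc.le)
  simp_rw [mul_comm (cos _)]
  simpa [div_eq_mul_one_div 2 c] using h

theorem sqrt_div_half_div_two (x : ℝ) {b : ℝ} (hb : 0 < b) :
    √(x / (b / 2)) / 2 = √(x / 2) / √b := by
  rw [sqrt_div' x (by positivity : 0 ≤ b / 2), sqrt_div' x zero_le_two, sqrt_div' b zero_le_two]
  have : √b ≠ 0 := by positivity
  field_simp
  rw [sq_sqrt zero_le_two]

theorem inv_sqrt_eq_integral_Ioi_exp_neg_mul_sq {b : ℝ} (hb : 0 < b) :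
    (√b)⁻¹ = √(2 / π) * ∫ s in Ioi 0, exp (-(b / 2) * s ^ 2) := by
  rw [integral_gaussian_Ioi, sqrt_div_half_div_two _ hb, ← mul_div_assoc,
    ← sqrt_mul (by positivity)]
  field_simp
  simp

theorem intervalIntegral_cos_div_sqrt_one_add_sq (c : ℝ) {R : ℝ} (hR : 0 ≤ R) :
    ∫ w in 0..R, cos (c * w) / √(1 + w ^ 2) =
      √(2 / π) * ∫ s in Ioi 0,
        exp (-(s ^ 2 / 2)) * ∫ w in 0..R, cos (c * w) * exp (-(s ^ 2 / 2) * w ^ 2) := by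
  set f : ℝ → ℝ → ℝ := fun w s => cos (c * w) * exp (-((1 + w ^ 2) / 2) * s ^ 2)
  have hf (w s : ℝ) :
      f w s = exp (-(s ^ 2 / 2)) * (cos (c * w) * exp (-(s ^ 2 / 2) * w ^ 2)) := by
    simp only [f]
    rw [mul_left_comm, ← exp_add]
    ring_nf
  have hint : Integrable (Function.uncurry f)
      ((volume.restrict (Ioc 0 R)).prod (volume.restrict (Ioi 0))) := by
    refine Integrable.mono' (g := fun p : ℝ × ℝ => exp (-(1 / 2) * p.2 ^ 2)) ?_
      (by fun_prop) ?_
    · exact (integrable_const (1 : ℝ)).mul_prod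
        (integrable_exp_neg_mul_sq (by norm_num : (0 : ℝ) < 1 / 2)).integrableOn
        |>.congr (ae_of_all _ fun p => one_mul _)
    · refine ae_of_all _ fun p => ?_
      rw [Function.uncurry_apply_pair, norm_mul, norm_of_nonneg (exp_pos _).le, norm_eq_abs]
      refine (mul_le_of_le_one_left (exp_pos _).le (abs_cos_le_one _)).trans
        (exp_le_exp.mpr ?_)
      nlinarith [mul_nonneg (sq_nonneg p.1) (sq_nonneg p.2)]
  calc ∫ w in 0..R, cos (c * w) / √(1 + w ^ 2)
      = √(2 / π) * ∫ w in Ioc 0 R, ∫ s in Ioi 0, f w s := by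
        rw [integral_of_le hR, ← MeasureTheory.integral_const_mul]
        refine setIntegral_congr_fun measurableSet_Ioc fun w _ => ?_
        rw [MeasureTheory.integral_const_mul, div_eq_mul_inv,
          inv_sqrt_eq_integral_Ioi_exp_neg_mul_sq (by positivity)]
        ring
    _ = √(2 / π) * ∫ s in Ioi 0, ∫ w in Ioc 0 R, f w s := by
        rw [integral_integral_swap hint]
    _ = _ := by
        simp_rw [hf, MeasureTheory.integral_const_mul, integral_of_le hR]

theorem tendsto_integral_Ioi_exp_mul_intervalIntegral_cos_mul_mul_exp {c : ℝ} (hc : 0 < c) :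
    Tendsto (fun R => ∫ s in Ioi 0, exp (-(s ^ 2 / 2)) *
        ∫ w in 0..R, cos (c * w) * exp (-(s ^ 2 / 2) * w ^ 2)) atTop
      (𝓝 (√(π / 2) * ∫ s in Ioi 0, exp (-(s ^ 2 / 2) - c ^ 2 / (2 * s ^ 2)) / s)) := by
  rw [← MeasureTheory.integral_const_mul]
  refine tendsto_integral_filter_of_dominated_convergence
    (fun s => exp (-(1 / 2) * s ^ 2) * (2 / c))
    (Eventually.of_forall fun R => (by fun_prop : Continuous _).aestronglyMeasurable) ?_
    ((integrable_exp_neg_mul_sq (by norm_num : (0 : ℝ) < 1 / 2)).integrableOn.mul_const _) ?_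
  · filter_upwards [eventually_ge_atTop 0] with R hR
    refine ae_of_all _ fun s => ?_
    rw [norm_mul, norm_of_nonneg (exp_pos _).le, norm_eq_abs]
    exact mul_le_mul (le_of_eq (by ring_nf))
      (abs_intervalIntegral_cos_mul_mul_exp_neg_mul_sq_le (by positivity) hc hR) (abs_nonneg _)
      (exp_pos _).le
  · filter_upwards [ae_restrict_mem measurableSet_Ioi] with s (hs : 0 < s)
    have hb : 0 < s ^ 2 / 2 := by positivity
    have h := (intervalIntegral_tendsto_integral_Ioi 0
      (integrable_cos_mul_mul_exp_neg_mul_sq hb c).integrableOn tendsto_id).const_mul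
        (exp (-(s ^ 2 / 2)))
    rw [integral_Ioi_cos_mul_mul_exp_neg_mul_sq hb, sqrt_div_half_div_two _ (by positivity),
      sqrt_sq hs.le] at h
    simp only [id] at h
    convert h using 2
    rw [show -c ^ 2 / (4 * (s ^ 2 / 2)) = -(c ^ 2 / (2 * s ^ 2)) by ring, sub_eq_add_neg,
      exp_add]
    ring

theorem integral_Ioi_comp_mul_left_div_self (g : ℝ → ℝ) {a : ℝ} (ha : 0 < a) :
    ∫ x in Ioi 0, g (a * x) / x = ∫ y in Ioi 0, g y / y := by
  have h := integral_comp_mul_left_Ioi' (fun y => g y / y) 0 ha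
  rw [mul_zero, smul_eq_mul, ← MeasureTheory.integral_const_mul] at h
  rw [← h]
  refine setIntegral_congr_fun measurableSet_Ioi fun x (hx : 0 < x) => ?_
  field_simp

theorem integral_Ioi_comp_sq_div_self (g : ℝ → ℝ) :
    ∫ x in Ioi 0, g (x ^ 2) / x = (1 / 2) * ∫ y in Ioi 0, g y / y := by
  rw [← integral_comp_rpow_Ioi_of_pos (g := fun y => g y / y) two_pos,
    ← MeasureTheory.integral_const_mul]
  refine setIntegral_congr_fun measurableSet_Ioi fun x (hx : 0 < x) => ?_
  rw [smul_eq_mul, rpow_two, show (2 : ℝ) - 1 = 1 by norm_num, rpow_one]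
  field_simp

/-- The modified Bessel function `K₀`, through one of its integral representations. -/
noncomputable def besselK0 (c : ℝ) : ℝ :=
  (1 / 2) * ∫ t in Ioi 0, exp (-t - c ^ 2 / (4 * t)) / t

theorem integral_Ioi_exp_neg_mul_sub_div_div {a b c : ℝ} (ha : 0 < a)
    (hc : c ^ 2 = 4 * a * b) :
    ∫ t in Ioi 0, exp (-(a * t) - b / t) / t = 2 * besselK0 c := by
  rw [besselK0, ← integral_Ioi_comp_mul_left_div_self (fun y => exp (-y - c ^ 2 / (4 * y))) ha]
  have hexp (t : ℝ) : c ^ 2 / (4 * (a * t)) = b / t := by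
    rw [hc]
    rcases eq_or_ne t 0 with rfl | ht
    · simp
    · field_simp
  simp only [hexp]
  ring

theorem integral_Ioi_exp_neg_sq_div_two_sub_div_div (c : ℝ) :
    ∫ s in Ioi 0, exp (-(s ^ 2 / 2) - c ^ 2 / (2 * s ^ 2)) / s = besselK0 c := by
  have h := integral_Ioi_comp_sq_div_self fun y => exp (-(1 / 2 * y) - c ^ 2 / 2 / y)
  rw [integral_Ioi_exp_neg_mul_sub_div_div (c := c) one_half_pos (by ring)] at h
  rw [show besselK0 c = 1 / 2 * (2 * besselK0 c) by ring, ← h]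
  refine setIntegral_congr_fun measurableSet_Ioi fun s _ => ?_
  congr 2
  ring

theorem tendsto_intervalIntegral_cos_div_sqrt_one_add_sq {c : ℝ} (hc : 0 < c) :
    Tendsto (fun R => ∫ w in 0..R, cos (c * w) / √(1 + w ^ 2)) atTop (𝓝 (besselK0 c)) := by
  have h :=
    (tendsto_integral_Ioi_exp_mul_intervalIntegral_cos_mul_mul_exp hc).const_mul √(2 / π)
  rw [integral_Ioi_exp_neg_sq_div_two_sub_div_div, ← mul_assoc, ← sqrt_mul (by positivity),
    div_mul_div_comm, mul_comm 2 π, div_self (by positivity), sqrt_one, one_mul] at h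
  refine h.congr' ?_
  filter_upwards [eventually_ge_atTop 0] with R hR
  exact (intervalIntegral_cos_div_sqrt_one_add_sq c hR).symm

theorem Brho_eq_sq_add_mul_sq (ρ x y : ℝ) :
    Brho ρ x y = (x - ρ * y) ^ 2 + (1 - ρ ^ 2) * y ^ 2 := by
  rw [Brho]; ring

theorem Brho_nonneg {ρ : ℝ} (hρ : ρ ^ 2 ≤ 1) (x y : ℝ) : 0 ≤ Brho ρ x y := by
  rw [Brho_eq_sq_add_mul_sq]
  have : 0 ≤ 1 - ρ ^ 2 := by linarith
  positivity

theorem Brho_pos {ρ x y : ℝ} (hρ : ρ ^ 2 < 1) (hxy : (x, y) ≠ (0, 0)) : 0 < Brho ρ x y := by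
  rw [Brho_eq_sq_add_mul_sq]
  rcases eq_or_ne y 0 with rfl | hy
  · have hx : x ≠ 0 := fun hx => hxy (by rw [hx])
    simp only [mul_zero, sub_zero, zero_pow two_ne_zero, add_zero]
    positivity
  · have : 0 < 1 - ρ ^ 2 := by linarith
    positivity

theorem Brho_sub_mul (ρ x y m₁ m₂ t : ℝ) :
    Brho ρ (x - m₁ * t) (y - m₂ * t) =
      Brho ρ x y + t * Arho ρ x y m₁ m₂ + t ^ 2 * Brho ρ m₁ m₂ := by
  simp only [Brho, Arho]; ring

theorem exp_neg_mul_mul_exp_neg_Brho_sub_mul_div {d t : ℝ} (hd : d ≠ 0) (ht : t ≠ 0)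
    (ρ r x y m₁ m₂ : ℝ) :
    exp (-r * t) * exp (-Brho ρ (x - m₁ * t) (y - m₂ * t) / (2 * t * d)) =
      exp (-Arho ρ x y m₁ m₂ / (2 * d)) *
        exp (-((r + Brho ρ m₁ m₂ / (2 * d)) * t) - Brho ρ x y / (2 * d) / t) := by
  rw [← exp_add, ← exp_add, Brho_sub_mul]
  congr 1
  field_simp
  ring

theorem integral_Ioi_exp_neg_mul_mul_exp_neg_Brho_sub_mul_div_div {ρ r x y m₁ m₂ c d : ℝ}
    (hd : d ≠ 0) (hr : 0 < r + Brho ρ m₁ m₂ / (2 * d))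
    (hc : c ^ 2 = 2 * (r + Brho ρ m₁ m₂ / (2 * d)) * Brho ρ x y / d) :
    ∫ t in Ioi 0, exp (-r * t) * exp (-Brho ρ (x - m₁ * t) (y - m₂ * t) / (2 * t * d)) / t =
      2 * exp (-Arho ρ x y m₁ m₂ / (2 * d)) * besselK0 c := by
  have hc' : c ^ 2 = 4 * (r + Brho ρ m₁ m₂ / (2 * d)) * (Brho ρ x y / (2 * d)) := by
    rw [hc]; field_simp; ring
  rw [mul_assoc, mul_left_comm, ← integral_Ioi_exp_neg_mul_sub_div_div hr hc',
    ← MeasureTheory.integral_const_mul]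
  refine setIntegral_congr_fun measurableSet_Ioi fun t (ht : 0 < t) => ?_
  rw [exp_neg_mul_mul_exp_neg_Brho_sub_mul_div hd ht.ne', mul_div_assoc]

theorem resolvent_kernel_2d_gbm_general (a₁ a₂ ρ r u v : ℝ)
    (hρ : ρ ∈ Set.Ioo (-1 : ℝ) 1) (hr : 0 < r)
    (m₁ m₂ uh vh : ℝ)
    (hne : (uh, vh) ≠ (0, 0)) :
    ∃ K : ℝ,
      Tendsto (fun R => ∫ w in (0 : ℝ)..R,
          Real.cos (Real.sqrt
              (2 * (r + Brho ρ m₁ m₂ / (2 * (1 - ρ ^ 2))) * Brho ρ uh vh /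
                (1 - ρ ^ 2)) * w) /
            Real.sqrt (1 + w ^ 2)) atTop (𝓝 K) ∧
      (∫ t in Set.Ioi (0 : ℝ),
          Real.exp (-r * t) * (a₁ * a₂ * u * v)⁻¹ *
            (2 * Real.pi * t * Real.sqrt (1 - ρ ^ 2))⁻¹ *
            Real.exp (-Brho ρ (uh - m₁ * t) (vh - m₂ * t) / (2 * t * (1 - ρ ^ 2))))
        = (Real.pi * Real.sqrt (1 - ρ ^ 2) * (a₁ * a₂ * u * v))⁻¹ *
            Real.exp (-Arho ρ uh vh m₁ m₂ / (2 * (1 - ρ ^ 2))) * K := by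
  have hρ2 : ρ ^ 2 < 1 := by nlinarith [hρ.1, hρ.2]
  have hD : 0 < 1 - ρ ^ 2 := by linarith
  have hB := Brho_pos hρ2 hne
  have hr' : 0 < r + Brho ρ m₁ m₂ / (2 * (1 - ρ ^ 2)) := by
    have := Brho_nonneg hρ2.le m₁ m₂
    positivity
  have hc := sq_sqrt (by positivity :
    0 ≤ 2 * (r + Brho ρ m₁ m₂ / (2 * (1 - ρ ^ 2))) * Brho ρ uh vh / (1 - ρ ^ 2))
  refine ⟨_, tendsto_intervalIntegral_cos_div_sqrt_one_add_sq (sqrt_pos.mpr (by positivity)),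
    ?_⟩
  calc _ = (2 * π * √(1 - ρ ^ 2) * (a₁ * a₂ * u * v))⁻¹ * ∫ t in Ioi 0, exp (-r * t) *
          exp (-Brho ρ (uh - m₁ * t) (vh - m₂ * t) / (2 * t * (1 - ρ ^ 2))) / t := by
        rw [← MeasureTheory.integral_const_mul]
        refine setIntegral_congr_fun measurableSet_Ioi fun t _ => ?_
        field_simp
    _ = _ := by
        rw [integral_Ioi_exp_neg_mul_mul_exp_neg_Brho_sub_mul_div_div hD.ne' hr' hc]
        field_simp

/-- Explicit resolvent kernel of a two-dimensional geometric Brownian motion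
(Section 3.6):
`∫₀^∞ e^{-rt} (a₁a₂uv)⁻¹ (2πt√(1-ρ²))⁻¹ exp(−B_ρ(û−m₁t, v̂−m₂t)/(2t(1-ρ²))) dt
  = (π√(1-ρ²) a₁a₂uv)⁻¹ exp(−A_ρ(û,v̂;m₁,m₂)/(2(1-ρ²))) K₀(√(2r̂ B_ρ(û,v̂)/(1-ρ²)))`,
where `r̂ = r + B_ρ(m₁,m₂)/(2(1-ρ²))` and `K₀(c) = ∫₀^∞ cos(cw)/√(1+w²) dw` is
understood as an improper integral. -/
theorem resolvent_kernel_2d_gbm (a₁ a₂ μ₁ μ₂ ρ r x₁ x₂ u v : ℝ)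
    (ha₁ : 0 < a₁) (ha₂ : 0 < a₂) (hρ : ρ ∈ Set.Ioo (-1 : ℝ) 1) (hr : 0 < r)
    (hx₁ : 0 < x₁) (hx₂ : 0 < x₂) (hu : 0 < u) (hv : 0 < v)
    (m₁ m₂ uh vh : ℝ)
    (hm₁ : m₁ = (μ₁ - a₁ ^ 2 / 2) / a₁) (hm₂ : m₂ = (μ₂ - a₂ ^ 2 / 2) / a₂)
    (huh : uh = (1 / a₁) * Real.log (u / x₁)) (hvh : vh = (1 / a₂) * Real.log (v / x₂))
    (hne : (uh, vh) ≠ (0, 0)) :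
    ∃ K : ℝ,
      Tendsto (fun R => ∫ w in (0 : ℝ)..R,
          Real.cos (Real.sqrt
              (2 * (r + Brho ρ m₁ m₂ / (2 * (1 - ρ ^ 2))) * Brho ρ uh vh /
                (1 - ρ ^ 2)) * w) /
            Real.sqrt (1 + w ^ 2)) atTop (𝓝 K) ∧
      (∫ t in Set.Ioi (0 : ℝ),
          Real.exp (-r * t) * (a₁ * a₂ * u * v)⁻¹ *
            (2 * Real.pi * t * Real.sqrt (1 - ρ ^ 2))⁻¹ *
            Real.exp (-Brho ρ (uh - m₁ * t) (vh - m₂ * t) / (2 * t * (1 - ρ ^ 2))))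
        = (Real.pi * Real.sqrt (1 - ρ ^ 2) * (a₁ * a₂ * u * v))⁻¹ *
            Real.exp (-Arho ρ uh vh m₁ m₂ / (2 * (1 - ρ ^ 2))) * K :=
  resolvent_kernel_2d_gbm_general a₁ a₂ ρ r u v hρ hr m₁ m₂ uh vh hne
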